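/- Fix integers 0 ≤ a ≤ b ≤ n and let ζ = exp(πi/6) ∈ ℂ. Suppose (C^w_{u,v}) and (D^w_{u,v}) are two families of polynomials in ℂ[δ₀,δ₁,δ₂,y₁,…,y_n], indexed by triples (u,v,w) of 012-strings for Fl(a,b;n), and both families satisfy: (i) C^w_{w,w} = ∏_{i<j, w_i>w_j} (y_j − y_i) for every 012-string w, and (ii) (C_u ζ^{11} + C_v ζ^{7} + C_w ζ^{3})·C^w_{u,v} = ζ^5 Σ_{u→u′} δ(u/u′)·C^w_{u′,v} + ζ Σ_{v→v′} δ(v/v′)·C^w_{u,v′} + ζ^9 Σ_{w′→w} δ(w′/w)·C^{w′}_{u,v} for all triples (u,v,w). Then C^w_{u,v} = D^w_{u,v} for all 012-strings u, v, w. -/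

import Mathlib

/-!
STATEMENT 0: Fix 0 ≤ a ≤ b ≤ n and ζ = exp(πi/6).  If two families of
polynomials C^w_{u,v}, D^w_{u,v} in ℂ[δ₀,δ₁,δ₂,y₁,…,y_n], indexed by triples
of 012-strings for Fl(a,b;n), both satisfy
(i)  C^w_{w,w} = ∏_{i<j, w_i>w_j} (y_j − y_i), and
(ii) (C_u ζ^{11} + C_v ζ^{7} + C_w ζ^{3})·C^w_{u,v}
       = ζ^5 Σ_{u→u′} δ(u/u′) C^w_{u′,v} + ζ Σ_{v→v′} δ(v/v′) C^w_{u,v′}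
         + ζ^9 Σ_{w′→w} δ(w′/w) C^{w′}_{u,v},
then the two families coincide.  (`Cf u v w` denotes C^w_{u,v}.)
-/
set_option maxHeartbeats 1000000
open scoped Classical

namespace TwoStep

variable (n a b : ℕ)

/-- 012-strings for the two-step flag variety Fl(a,b;n): sequences in
{0,1,2}^n with exactly `a` zeros, `b - a` ones and `n - b` twos. -/
def Str : Type :=
  {s : Fin n → Fin 3 //
    (Finset.univ.filter fun i => s i = 0).card = a ∧
    (Finset.univ.filter fun i => s i = 1).card = b - a ∧
    (Finset.univ.filter fun i => s i = 2).card = n - b}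

noncomputable instance : Fintype (Str n a b) := by
  unfold Str; exact Fintype.ofFinite _

/-- The coefficient ring ℂ[δ₀,δ₁,δ₂,y₁,…,y_n]. -/
abbrev Rng := MvPolynomial (Fin 3 ⊕ Fin n) ℂ

/-- ζ = exp(π i / 6). -/
noncomputable def zet : ℂ := Complex.exp ((Real.pi : ℂ) * Complex.I / 6)

/-- The variable δ_j. -/
noncomputable def dvar (j : Fin 3) : Rng n := MvPolynomial.X (Sum.inl j)

/-- The variable y_i. -/
noncomputable def yvar (i : Fin n) : Rng n := MvPolynomial.X (Sum.inr i)

/-- C_u = Σ_i δ_{u_i} y_i. -/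
noncomputable def Cstr (u : Str n a b) : Rng n :=
  ∑ i : Fin n, dvar n (u.1 i) * yvar n i

/-- Bruhat covers `u → u'`: `u'` is obtained from `u` by replacing a
connected subsequence `(0,2,…,2,1)` by `(1,2,…,2,0)`, or `(0,2)` by
`(2,0)`, or `(1,0,…,0,2)` by `(2,0,…,0,1)`. -/
def Cover (u u' : Str n a b) : Prop :=
  ∃ i j : Fin n, i < j ∧ (∀ k, k ≠ i → k ≠ j → u'.1 k = u.1 k) ∧
    ((u.1 i = 0 ∧ u.1 j = 1 ∧ u'.1 i = 1 ∧ u'.1 j = 0 ∧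
        ∀ k, i < k → k < j → u.1 k = 2) ∨
     ((j : ℕ) = (i : ℕ) + 1 ∧ u.1 i = 0 ∧ u.1 j = 2 ∧ u'.1 i = 2 ∧ u'.1 j = 0) ∨
     (u.1 i = 1 ∧ u.1 j = 2 ∧ u'.1 i = 2 ∧ u'.1 j = 1 ∧
        ∀ k, i < k → k < j → u.1 k = 0))

/-- δ(u/u') = δ_{u_i} − δ_{u'_i}, where `i` is the least index at which `u`
and `u'` differ (and `0` if they agree everywhere). -/
noncomputable def covDelta (u u' : Str n a b) : Rng n :=
  if h : (Finset.univ.filter fun i => u.1 i ≠ u'.1 i).Nonempty then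
    dvar n (u.1 ((Finset.univ.filter fun i => u.1 i ≠ u'.1 i).min' h)) -
      dvar n (u'.1 ((Finset.univ.filter fun i => u.1 i ≠ u'.1 i).min' h))
  else 0

/-- The family `Cf` (with `Cf u v w` meaning `C^w_{u,v}`) satisfies the
identities (i) (extreme case, Kostant–Kumar) and (ii) (recursion). -/
noncomputable def SatisfiesRecursion
    (Cf : Str n a b → Str n a b → Str n a b → Rng n) : Prop :=
  (∀ w : Str n a b, Cf w w w =
      ∏ p ∈ Finset.univ.filter
          (fun p : Fin n × Fin n => p.1 < p.2 ∧ w.1 p.2 < w.1 p.1),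
        (yvar n p.2 - yvar n p.1)) ∧
  (∀ u v w : Str n a b,
    (Cstr n a b u * MvPolynomial.C (zet ^ 11) +
        Cstr n a b v * MvPolynomial.C (zet ^ 7) +
        Cstr n a b w * MvPolynomial.C (zet ^ 3)) * Cf u v w =
      MvPolynomial.C (zet ^ 5) *
          ∑ u' ∈ Finset.univ.filter (fun u' => Cover n a b u u'),
            covDelta n a b u u' * Cf u' v w +
        MvPolynomial.C zet *
          ∑ v' ∈ Finset.univ.filter (fun v' => Cover n a b v v'),
            covDelta n a b v v' * Cf u v' w +
        MvPolynomial.C (zet ^ 9) *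
          ∑ w' ∈ Finset.univ.filter (fun w' => Cover n a b w' w),
            covDelta n a b w' w * Cf u v w')

/-!
Recursion (ii) is triangular. With the weight `∑ i · u_i`, which drops along every Bruhat cover,
each term on its right-hand side involves a triple of strictly smaller
`weight u + weight v - weight w`. Off the diagonal the left-hand coefficient
`C_u ζ^11 + C_v ζ^7 + C_w ζ^3` is nonzero: at the point `δ_t = y_i = 1` (all other variables `0`),
where `u_i, v_i, w_i` are not all equal and `t` is one of them, it becomes a nonempty proper
subsum of `ζ^11, ζ^7, ζ^3`, and these never vanish for a primitive 12th root of unity `ζ`. On the diagonal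
the coefficient is `C_w (ζ^11 + ζ^7 + ζ^3) = 0`, and (i) supplies the value instead. Well-founded
induction on the triples finishes the proof.
-/

section

variable {n a b}

def weight (u : Str n a b) : ℕ := ∑ i : Fin n, (i : ℕ) * (u.1 i : ℕ)

theorem weight_lt_of_cover {u u' : Str n a b} (h : Cover n a b u u') :
    weight u' < weight u := by
  obtain ⟨i, j, hij, hsame, hcase⟩ := h
  have hij' : (i : ℕ) < j := hij
  have hrest : ∑ k ∈ {i, j}ᶜ, (k : ℕ) * (u'.1 k : ℕ) = ∑ k ∈ {i, j}ᶜ, (k : ℕ) * (u.1 k : ℕ) :=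
    Finset.sum_congr rfl fun k hk => by
      simp only [Finset.mem_compl, Finset.mem_insert, Finset.mem_singleton, not_or] at hk
      rw [hsame k hk.1 hk.2]
  have hpair : (i : ℕ) * (u'.1 i : ℕ) + j * (u'.1 j : ℕ) < i * (u.1 i : ℕ) + j * (u.1 j : ℕ) := by
    rcases hcase with ⟨h1, h2, h3, h4, -⟩ | ⟨-, h1, h2, h3, h4⟩ | ⟨h1, h2, h3, h4, -⟩ <;>
      simp only [h1, h2, h3, h4, Fin.isValue, Fin.val_zero, Fin.val_one, Fin.val_two] <;> omega
  unfold weight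
  rw [← Finset.sum_add_sum_compl {i, j}, ← Finset.sum_add_sum_compl {i, j} (fun k => _ * _),
    Finset.sum_pair hij.ne, Finset.sum_pair hij.ne, hrest]
  omega

def descent (t : Str n a b × Str n a b × Str n a b) : ℤ :=
  weight t.1 + weight t.2.1 - weight t.2.2

theorem wellFounded_descent :
    WellFounded (InvImage (· < ·) (descent : Str n a b × Str n a b × Str n a b → ℤ)) :=
  Finite.wellFounded_of_trans_of_irrefl _

theorem isPrimitiveRoot_zet : IsPrimitiveRoot zet 12 := by
  convert Complex.isPrimitiveRoot_exp 12 (by norm_num) using 1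
  unfold zet
  congr 1
  push_cast
  ring

theorem zet_pow_eleven_add_zet_pow_three_ne_zero : zet ^ 11 + zet ^ 3 ≠ 0 := by
  have h6 : zet ^ 6 = -1 :=
    (isPrimitiveRoot_zet.pow_of_dvd (by norm_num) (by norm_num : 6 ∣ 12)).eq_neg_one_of_two_right
  have h2 : zet ^ 2 ≠ 1 := isPrimitiveRoot_zet.pow_ne_one_of_pos_of_lt (by norm_num) (by norm_num)
  have hfactor : zet ^ 11 + zet ^ 3 = zet ^ 3 * (1 - zet ^ 2) := by
    linear_combination zet ^ 5 * h6
  rw [hfactor]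
  exact mul_ne_zero (pow_ne_zero _ (isPrimitiveRoot_zet.ne_zero (by norm_num)))
    (sub_ne_zero.2 h2.symm)

noncomputable def prefactor (u v w : Str n a b) : Rng n :=
  Cstr n a b u * MvPolynomial.C (zet ^ 11) + Cstr n a b v * MvPolynomial.C (zet ^ 7) +
    Cstr n a b w * MvPolynomial.C (zet ^ 3)

def unitPoint (t : Fin 3) (i : Fin n) : Fin 3 ⊕ Fin n → ℂ :=
  Sum.elim (Pi.single t 1) (Pi.single i 1)

theorem eval_unitPoint_Cstr (u : Str n a b) (t : Fin 3) (i : Fin n) :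
    MvPolynomial.eval (unitPoint t i) (Cstr n a b u) = if u.1 i = t then 1 else 0 := by
  simp [Cstr, dvar, yvar, unitPoint, Pi.single_apply]

theorem eval_unitPoint_prefactor (u v w : Str n a b) (t : Fin 3) (i : Fin n) :
    MvPolynomial.eval (unitPoint t i) (prefactor u v w) =
      (if u.1 i = t then zet ^ 11 else 0) + (if v.1 i = t then zet ^ 7 else 0) +
        (if w.1 i = t then zet ^ 3 else 0) := by
  simp [prefactor, eval_unitPoint_Cstr]

theorem prefactor_ne_zero {u v w : Str n a b} (h : ¬(u = v ∧ v = w)) :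
    prefactor u v w ≠ 0 := by
  have hζ : zet ≠ 0 := isPrimitiveRoot_zet.ne_zero (by norm_num)
  intro h0
  have hvanish (t i) : MvPolynomial.eval (unitPoint t i) (prefactor u v w) = 0 := by
    rw [h0, map_zero]
  by_cases huv : u = v
  · subst huv
    obtain ⟨i, hi⟩ := Function.ne_iff.1 fun hw => h ⟨rfl, Subtype.ext hw⟩
    simpa [eval_unitPoint_prefactor, hi, hζ] using hvanish (w.1 i) i
  · obtain ⟨i, hi⟩ := Function.ne_iff.1 fun huv' => huv (Subtype.ext huv')
    have := hvanish (u.1 i) i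
    rw [eval_unitPoint_prefactor, if_pos rfl, if_neg (Ne.symm hi)] at this
    split_ifs at this
    · exact zet_pow_eleven_add_zet_pow_three_ne_zero (by simpa using this)
    · exact pow_ne_zero 11 hζ (by simpa using this)

noncomputable def coverSum (Cf : Str n a b → Str n a b → Str n a b → Rng n) (u v w : Str n a b) :
    Rng n :=
  MvPolynomial.C (zet ^ 5) *
      ∑ u' ∈ Finset.univ.filter (fun u' => Cover n a b u u'), covDelta n a b u u' * Cf u' v w +
    MvPolynomial.C zet *
      ∑ v' ∈ Finset.univ.filter (fun v' => Cover n a b v v'), covDelta n a b v v' * Cf u v' w +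
    MvPolynomial.C (zet ^ 9) *
      ∑ w' ∈ Finset.univ.filter (fun w' => Cover n a b w' w), covDelta n a b w' w * Cf u v w'

theorem SatisfiesRecursion.prefactor_mul {Cf : Str n a b → Str n a b → Str n a b → Rng n}
    (hC : SatisfiesRecursion n a b Cf) (u v w : Str n a b) :
    prefactor u v w * Cf u v w = coverSum Cf u v w :=
  hC.2 u v w

theorem coverSum_congr {Cf Df : Str n a b → Str n a b → Str n a b → Rng n} {u v w : Str n a b}
    (hu : ∀ u', Cover n a b u u' → Cf u' v w = Df u' v w)
    (hv : ∀ v', Cover n a b v v' → Cf u v' w = Df u v' w)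
    (hw : ∀ w', Cover n a b w' w → Cf u v w' = Df u v w') :
    coverSum Cf u v w = coverSum Df u v w := by
  unfold coverSum
  refine congrArg₂ (· + ·) (congrArg₂ (· + ·) (congrArg _ ?_) (congrArg _ ?_)) (congrArg _ ?_) <;>
    refine Finset.sum_congr rfl fun x hx => congrArg _ ?_ <;> rw [Finset.mem_filter] at hx
  exacts [hu x hx.2, hv x hx.2, hw x hx.2]
end

theorem recursion_determines_constants
    (Cf Df : Str n a b → Str n a b → Str n a b → Rng n)
    (hC : SatisfiesRecursion n a b Cf) (hD : SatisfiesRecursion n a b Df) :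
    ∀ u v w, Cf u v w = Df u v w := by
  suffices h : ∀ t : Str n a b × Str n a b × Str n a b, Cf t.1 t.2.1 t.2.2 = Df t.1 t.2.1 t.2.2 from
    fun u v w => h (u, v, w)
  intro t
  induction t using wellFounded_descent.induction with
  | _ t ih =>
  obtain ⟨u, v, w⟩ := t
  by_cases hdiag : u = v ∧ v = w
  · obtain ⟨rfl, rfl⟩ := hdiag
    rw [hC.1, hD.1]
  refine mul_left_cancel₀ (prefactor_ne_zero hdiag) ?_
  rw [hC.prefactor_mul, hD.prefactor_mul]
  refine coverSum_congr (fun u' h => ih (u', v, w) ?_) (fun v' h => ih (u, v', w) ?_)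
    (fun w' h => ih (u, v, w') ?_) <;>
  · have := weight_lt_of_cover h
    simp only [InvImage, descent]
    omega

end TwoStep
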